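/- Coercivity of the relative energy, essential part, for the ideal gas: Let c_v > 1, d ≥ 1 and 0 < δ < 1. There exists a constant c > 0, depending only on δ, c_v and d, such that for all ρ, ϑ, ρ̃, θ̃ ∈ [δ, 1/δ] and all u, ũ ∈ ℝ^d, E(ρ,ϑ,u | ρ̃,θ̃,ũ) ≥ c(|ρ − ρ̃|² + |ϑ − θ̃|² + |u − ũ|²), where E is the relative energy built from the ideal gas constitutive relations. -/

import Mathlib

/-! With `φ(t) = t - 1 - log t`, the relative energy of the ideal gas splits as
`½ρ|u - ũ|² + c_v ρ θ̃ φ(ϑ/θ̃) + θ̃ ρ φ(ρ̃/ρ)`, a sum of nonnegative terms. Since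
`log t = 2 log √t ≤ 2(√t - 1)`, we have `φ(t) ≥ (√t - 1)²`, hence `(t - 1)² ≤ 2(t + 1) φ(t)`,
which in homogeneous form reads `(b - a)² ≤ 2(a + b) · a φ(b/a)`. On the box `[δ, 1/δ]`
each term of the relative energy therefore dominates `δ²/4` times its squared difference. -/

open Real Set

/-- Ballistic free energy for the ideal gas `p = ρϑ`, `e = c_vϑ`,
`s = log(ϑ^{c_v}/ρ)`: `H_θ̃(ρ,ϑ) = ρ(c_vϑ − θ̃ log(ϑ^{c_v}/ρ))`. -/
noncomputable def Hgas (cv θt ρ ϑ : ℝ) : ℝ :=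
  ρ * (cv * ϑ - θt * Real.log (ϑ ^ cv / ρ))

/-- Relative energy built from the ideal gas constitutive relations. -/
noncomputable def relEgas (cv : ℝ) {d : ℕ} (ρ ϑ : ℝ) (u : EuclideanSpace ℝ (Fin d))
    (ρt θt : ℝ) (ut : EuclideanSpace ℝ (Fin d)) : ℝ :=
  2⁻¹ * ρ * ‖u - ut‖ ^ 2 + Hgas cv θt ρ ϑ
    - deriv (fun r => Hgas cv θt r θt) ρt * (ρ - ρt) - Hgas cv θt ρt θt

lemma sub_sub_mul_log_div_nonneg {a b : ℝ} (ha : 0 < a) (hb : 0 < b) :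
    0 ≤ b - a - a * log (b / a) := by
  have := mul_le_mul_of_nonneg_left (log_le_sub_one_of_pos (div_pos hb ha)) ha.le
  rw [mul_sub, mul_div_cancel₀ _ ha.ne', mul_one] at this
  linarith

lemma sq_sqrt_sub_one_le_sub_one_sub_log {t : ℝ} (ht : 0 < t) :
    (√t - 1) ^ 2 ≤ t - 1 - log t := by
  have hlog : log t ≤ 2 * (√t - 1) := by
    calc log t = 2 * log √t := by rw [log_sqrt ht.le]; ring
      _ ≤ 2 * (√t - 1) := by gcongr; exact log_le_sub_one_of_pos (sqrt_pos.2 ht)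
  nlinarith [sq_sqrt ht.le]

lemma sq_sub_one_le_two_mul_add_one_mul_sub_one_sub_log {t : ℝ} (ht : 0 < t) :
    (t - 1) ^ 2 ≤ 2 * (t + 1) * (t - 1 - log t) := by
  have hs := sq_sqrt ht.le
  have hφ : 0 ≤ t - 1 - log t := by linarith [log_le_sub_one_of_pos ht]
  calc (t - 1) ^ 2 = (√t + 1) ^ 2 * (√t - 1) ^ 2 := by
        linear_combination (2 - t - √t ^ 2) * hs
    _ ≤ (√t + 1) ^ 2 * (t - 1 - log t) := by
        gcongr; exact sq_sqrt_sub_one_le_sub_one_sub_log ht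
    _ ≤ 2 * (t + 1) * (t - 1 - log t) := by
        gcongr; nlinarith [sq_nonneg (√t - 1)]

lemma sq_sub_le_two_mul_add_mul_sub_sub_mul_log_div {a b : ℝ} (ha : 0 < a) (hb : 0 < b) :
    (b - a) ^ 2 ≤ 2 * (a + b) * (b - a - a * log (b / a)) := by
  have key := sq_sub_one_le_two_mul_add_one_mul_sub_one_sub_log (div_pos hb ha)
  have hb' : b = a * (b / a) := by field_simp
  set t := b / a
  rw [hb']
  calc (a * t - a) ^ 2 = a ^ 2 * (t - 1) ^ 2 := by ring
    _ ≤ a ^ 2 * (2 * (t + 1) * (t - 1 - log t)) := by gcongr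
    _ = 2 * (a + a * t) * (a * t - a - a * log t) := by ring

lemma mul_sq_sub_le_four_mul_sub_sub_mul_log_div {δ a b : ℝ} (hδ : 0 < δ)
    (ha : a ∈ Icc δ (1 / δ)) (hb : b ∈ Icc δ (1 / δ)) :
    δ * (b - a) ^ 2 ≤ 4 * (b - a - a * log (b / a)) := by
  have ha0 := hδ.trans_le ha.1
  have hb0 := hδ.trans_le hb.1
  have key := sq_sub_le_two_mul_add_mul_sub_sub_mul_log_div ha0 hb0
  have hsum : δ * (a + b) ≤ 2 := by
    have := ha.2; have := hb.2
    rw [le_div_iff₀ hδ] at *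
    linarith
  nlinarith [mul_le_mul_of_nonneg_right hsum (sub_sub_mul_log_div_nonneg ha0 hb0)]

lemma hasDerivAt_Hgas_density (cv θt : ℝ) {ρ ϑ : ℝ} (hρ : 0 < ρ) (hϑ : 0 < ϑ) :
    HasDerivAt (fun r => Hgas cv θt r ϑ)
      (cv * ϑ - θt * cv * log ϑ + θt * (log ρ + 1)) ρ := by
  have hlin : HasDerivAt (fun r => (cv * ϑ - θt * cv * log ϑ) * r + θt * (r * log r))
      ((cv * ϑ - θt * cv * log ϑ) * 1 + θt * (log ρ + 1)) ρ :=
    ((hasDerivAt_id ρ).const_mul _).add ((hasDerivAt_mul_log hρ.ne').const_mul θt)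
  refine (mul_one (cv * ϑ - θt * cv * log ϑ) ▸ hlin).congr_of_eventuallyEq ?_
  filter_upwards [eventually_gt_nhds hρ] with r hr
  rw [Hgas, log_div (rpow_pos_of_pos hϑ cv).ne' hr.ne', log_rpow hϑ]
  ring

lemma relEgas_eq (cv : ℝ) {d : ℕ} {ρ ϑ ρt θt : ℝ} (hρ : 0 < ρ) (hϑ : 0 < ϑ) (hρt : 0 < ρt)
    (hθt : 0 < θt) (u ut : EuclideanSpace ℝ (Fin d)) :
    relEgas cv ρ ϑ u ρt θt ut = 2⁻¹ * ρ * ‖u - ut‖ ^ 2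
      + cv * ρ * (ϑ - θt - θt * log (ϑ / θt)) + θt * (ρt - ρ - ρ * log (ρt / ρ)) := by
  rw [relEgas, (hasDerivAt_Hgas_density cv θt hρt hθt).deriv, Hgas, Hgas,
    log_div (rpow_pos_of_pos hϑ cv).ne' hρ.ne', log_rpow hϑ,
    log_div (rpow_pos_of_pos hθt cv).ne' hρt.ne', log_rpow hθt,
    log_div hϑ.ne' hθt.ne', log_div hρt.ne' hρ.ne']
  ring

theorem relative_energy_coercive_essential_general (cv : ℝ) (hcv : 1 < cv)
    (d : ℕ) (δ : ℝ) (hδ0 : 0 < δ) :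
    ∃ c : ℝ, 0 < c ∧ ∀ ρ ϑ ρt θt : ℝ,
      ρ ∈ Icc δ (1 / δ) → ϑ ∈ Icc δ (1 / δ) →
      ρt ∈ Icc δ (1 / δ) → θt ∈ Icc δ (1 / δ) →
      ∀ u ut : EuclideanSpace ℝ (Fin d),
        c * (|ρ - ρt| ^ 2 + |ϑ - θt| ^ 2 + ‖u - ut‖ ^ 2)
          ≤ relEgas cv ρ ϑ u ρt θt ut := by
  refine ⟨δ ^ 2 / 4, by positivity, fun ρ ϑ ρt θt hρ hϑ hρt hθt u ut => ?_⟩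
  have hρ0 := hδ0.trans_le hρ.1
  have hϑ0 := hδ0.trans_le hϑ.1
  have hρt0 := hδ0.trans_le hρt.1
  have hθt0 := hδ0.trans_le hθt.1
  have hδ_le_one : δ ≤ 1 := by
    have := (le_div_iff₀' hδ0).1 (hρ.1.trans hρ.2)
    nlinarith
  have hkin : δ ^ 2 / 4 * ‖u - ut‖ ^ 2 ≤ 2⁻¹ * ρ * ‖u - ut‖ ^ 2 := by
    gcongr
    nlinarith [hρ.1]
  have htemp : δ ^ 2 / 4 * (ϑ - θt) ^ 2 ≤ cv * ρ * (ϑ - θt - θt * log (ϑ / θt)) := by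
    have hcvρ : δ ≤ cv * ρ := by nlinarith [hρ.1]
    nlinarith [mul_sq_sub_le_four_mul_sub_sub_mul_log_div hδ0 hθt hϑ,
      mul_le_mul_of_nonneg_right hcvρ (sub_sub_mul_log_div_nonneg hθt0 hϑ0)]
  have hdens : δ ^ 2 / 4 * (ρ - ρt) ^ 2 ≤ θt * (ρt - ρ - ρ * log (ρt / ρ)) := by
    nlinarith [mul_sq_sub_le_four_mul_sub_sub_mul_log_div hδ0 hρ hρt,
      mul_le_mul_of_nonneg_right hθt.1 (sub_sub_mul_log_div_nonneg hρ0 hρt0)]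
  rw [relEgas_eq cv hρ0 hϑ0 hρt0 hθt0, sq_abs, sq_abs]
  linarith

/-- **Coercivity of the relative energy, essential part, for the ideal gas.**
For `c_v > 1` and `0 < δ < 1` there is `c > 0`, depending only on `δ`, `c_v` and `d`,
such that for all state variables in `[δ, 1/δ]`,
`E(ρ,ϑ,u | ρ̃,θ̃,ũ) ≥ c(|ρ−ρ̃|² + |ϑ−θ̃|² + |u−ũ|²)`. -/
theorem relative_energy_coercive_essential (cv : ℝ) (hcv : 1 < cv)
    (d : ℕ) (hd : 1 ≤ d) (δ : ℝ) (hδ0 : 0 < δ) (hδ1 : δ < 1) :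
    ∃ c : ℝ, 0 < c ∧ ∀ ρ ϑ ρt θt : ℝ,
      ρ ∈ Icc δ (1 / δ) → ϑ ∈ Icc δ (1 / δ) →
      ρt ∈ Icc δ (1 / δ) → θt ∈ Icc δ (1 / δ) →
      ∀ u ut : EuclideanSpace ℝ (Fin d),
        c * (|ρ - ρt| ^ 2 + |ϑ - θt| ^ 2 + ‖u - ut‖ ^ 2)
          ≤ relEgas cv ρ ϑ u ρt θt ut :=
  relative_energy_coercive_essential_general cv hcv d δ hδ0
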